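/- In the block tournament construction [B M; M̃ᵀ C] with k, m odd, m > 3k, B and C regular tournaments on k and m vertices respectively, and M a k×m binary matrix with one row containing k zeroes and all other rows containing k+1 zeroes, every one of the last m players loses at least (m-1)/2 matches, and (m-1)/2 > (3k-1)/2; consequently the unique Copeland winner of the tournament is the player among the first k corresponding to the k-zeroes row of M. -/
import Mathlib


/-- The block tournament `[B M; M̃ᵀ C]`. -/
def blockBeats {k m : ℕ} (B : Fin k → Fin k → Bool) (C : Fin m → Fin m → Bool)
    (M : Fin k → Fin m → Bool) :
    Sum (Fin k) (Fin m) → Sum (Fin k) (Fin m) → Bool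
  | Sum.inl i, Sum.inl j => B i j
  | Sum.inl i, Sum.inr j => M i j
  | Sum.inr j, Sum.inl i => !(M i j)
  | Sum.inr i, Sum.inr j => C i j

/-- Number of matches lost by player `p` in the block tournament. -/
def blockLost {k m : ℕ} (B : Fin k → Fin k → Bool) (C : Fin m → Fin m → Bool)
    (M : Fin k → Fin m → Bool) (p : Sum (Fin k) (Fin m)) : ℕ :=
  (Finset.univ.filter (fun q => q ≠ p ∧ blockBeats B C M q p = true)).card

open Finset

lemma card_filter_sum {α β : Type*} [Fintype α] [Fintype β] [DecidableEq α] [DecidableEq β]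
    (p : α ⊕ β → Prop) [DecidablePred p] :
    (univ.filter p).card
      = (univ.filter (fun a => p (Sum.inl a))).card
        + (univ.filter (fun b => p (Sum.inr b))).card := by
  rw [← Fintype.card_subtype, ← Fintype.card_subtype, ← Fintype.card_subtype,
    ← Fintype.card_sum]
  exact Fintype.card_congr Equiv.subtypeSum

lemma col_count {n : ℕ} (R : Fin n → Fin n → Bool) (j : Fin n)
    (hirr : R j j = false) (htot : ∀ a b : Fin n, a ≠ b → R a b = !(R b a)) :
    (univ.filter (fun i => i ≠ j ∧ R i j = true)).card
      = (n - 1) - (univ.filter (fun i => R j i = true)).card := by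
  have h1 : (univ.filter (fun i => R j i = true))
      = (univ.filter (fun i : Fin n => i ≠ j ∧ ¬ (R i j = true))) := by
    ext i
    simp only [mem_filter, mem_univ, true_and]
    constructor
    · intro h
      have hij : i ≠ j := by rintro rfl; simp [hirr] at h
      refine ⟨hij, ?_⟩
      rw [htot i j hij, h]; simp
    · rintro ⟨hij, h⟩
      have := htot i j hij
      rw [this] at h
      simpa using h
  rw [h1]
  have h2 : (univ.filter (fun i : Fin n => i ≠ j ∧ R i j = true)).card
      + (univ.filter (fun i : Fin n => i ≠ j ∧ ¬ (R i j = true))).card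
      = (univ.filter (fun i : Fin n => i ≠ j)).card := by
    rw [← Finset.filter_filter, ← Finset.filter_filter]
    exact Finset.card_filter_add_card_filter_not _
  have h3 : (univ.filter (fun i : Fin n => i ≠ j)).card = n - 1 := by
    rw [Finset.filter_ne', Finset.card_erase_of_mem (mem_univ j), Finset.card_univ,
      Fintype.card_fin]
  omega

lemma lost_inr_eq {k m : ℕ} (B : Fin k → Fin k → Bool) (C : Fin m → Fin m → Bool)
    (M : Fin k → Fin m → Bool) (j : Fin m) :
    blockLost B C M (Sum.inr j)
      = (univ.filter (fun i : Fin k => M i j = true)).card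
        + (univ.filter (fun i : Fin m => i ≠ j ∧ C i j = true)).card := by
  rw [blockLost, card_filter_sum]
  congr 1
  · apply Finset.card_bij (fun a _ => a) <;> intro a <;>
      simp [blockBeats] <;> tauto
  · apply Finset.card_bij (fun a _ => a) <;> intro a <;>
      simp [blockBeats] <;> tauto

lemma lost_inl_eq {k m : ℕ} (B : Fin k → Fin k → Bool) (C : Fin m → Fin m → Bool)
    (M : Fin k → Fin m → Bool) (i : Fin k) :
    blockLost B C M (Sum.inl i)
      = (univ.filter (fun a : Fin k => a ≠ i ∧ B a i = true)).card
        + (univ.filter (fun b : Fin m => M i b = false)).card := by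
  rw [blockLost, card_filter_sum]
  congr 1
  · apply Finset.card_bij (fun a _ => a) <;> intro a <;>
      simp [blockBeats] <;> tauto
  · apply Finset.card_bij (fun a _ => a) <;> intro a <;>
      simp [blockBeats] <;> tauto

/-- In the block construction, every one of the last `m` players loses at least
`(m-1)/2` matches, `(m-1)/2 > (3k-1)/2`, and consequently the player corresponding to
the `k`-zeroes row of `M` is the unique Copeland winner (it loses strictly fewer matches
than every other player). -/
theorem stmt_9 {k m : ℕ} (hk : Odd k) (hm : Odd m) (hkm : 3 * k < m)
    (B : Fin k → Fin k → Bool) (C : Fin m → Fin m → Bool) (M : Fin k → Fin m → Bool)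
    (hBirr : ∀ i, B i i = false)
    (hBtot : ∀ i j : Fin k, i ≠ j → B i j = !(B j i))
    (hBreg : ∀ i : Fin k, (Finset.univ.filter (fun j => B i j = true)).card = (k - 1) / 2)
    (hCirr : ∀ i, C i i = false)
    (hCtot : ∀ i j : Fin m, i ≠ j → C i j = !(C j i))
    (hCreg : ∀ i : Fin m, (Finset.univ.filter (fun j => C i j = true)).card = (m - 1) / 2)
    (r : Fin k)
    (hr : (Finset.univ.filter (fun j => M r j = false)).card = k)
    (hother : ∀ i : Fin k, i ≠ r →
      (Finset.univ.filter (fun j => M i j = false)).card = k + 1) :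
    (∀ j : Fin m, (m - 1) / 2 ≤ blockLost B C M (Sum.inr j)) ∧
    (3 * k - 1) / 2 < (m - 1) / 2 ∧
    (∀ p : Sum (Fin k) (Fin m), p ≠ Sum.inl r →
      blockLost B C M (Sum.inl r) < blockLost B C M p) := by
  obtain ⟨a, ha⟩ := hk
  obtain ⟨b, hb⟩ := hm
  -- C-column counts
  have hCcol : ∀ j : Fin m,
      (univ.filter (fun i : Fin m => i ≠ j ∧ C i j = true)).card = (m - 1) / 2 := by
    intro j
    rw [col_count C j (hCirr j) hCtot, hCreg]
    omega
  have hBcol : ∀ i : Fin k,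
      (univ.filter (fun a : Fin k => a ≠ i ∧ B a i = true)).card = (k - 1) / 2 := by
    intro i
    rw [col_count B i (hBirr i) hBtot, hBreg]
    omega
  have hinr : ∀ j : Fin m, (m - 1) / 2 ≤ blockLost B C M (Sum.inr j) := by
    intro j
    rw [lost_inr_eq, hCcol]
    omega
  have hinlr : blockLost B C M (Sum.inl r) = (k - 1) / 2 + k := by
    rw [lost_inl_eq, hBcol, hr]
  refine ⟨hinr, by omega, ?_⟩
  intro p hp
  rcases p with i | j
  · have hir : i ≠ r := fun h => hp (by rw [h])
    rw [hinlr, lost_inl_eq, hBcol, hother i hir]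
    omega
  · have := hinr j
    rw [hinlr]
    omega
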